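/- arXiv:1708.04507 — 6 statements merged into one kernel-verified Lean document; each statement's English description precedes it below -/
import Mathlib

section
/- For positive integers n and r, and s ≥ 1, the generalized Ramanujan sum c_{r,s}(n) = Σ_{1≤j≤r^s, (j,r^s)_s=1} exp(2πi·nj/r^s) satisfies c_{r,s}(n) = Σ_{d^s | gcd-type divisor, i.e., d | r and d^s | n} d^s · μ(r/d), where μ is the Möbius function. Here (a,b)_s denotes the largest s-th power l^s dividing both a and b. -/
open Finset

/-- The generalized gcd `(a,b)_s`: the largest `s`-th power dividing both `a` and `b`. -/
noncomputable def ggcd (s a b : ℕ) : ℕ :=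
  sSup {m : ℕ | (∃ l : ℕ, m = l ^ s) ∧ m ∣ a ∧ m ∣ b}

/-- The generalized Ramanujan sum `c_{r,s}(n)`. -/
noncomputable def crs (s r n : ℕ) : ℂ :=
  ∑ j ∈ Finset.Icc 1 (r ^ s),
    if ggcd s j (r ^ s) = 1 then Complex.exp (2 * Real.pi * Complex.I * n * j / (r ^ s)) else 0

/-- The discrete Fourier transform of an `r^s`-periodic function. -/
noncomputable def dft (s r : ℕ) (f : ℕ → ℂ) (n : ℕ) : ℂ :=
  ∑ k ∈ Finset.Icc 1 (r ^ s), f k * Complex.exp (-(2 * Real.pi * Complex.I * k * n / (r ^ s)))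

/-- A function is `(r,s)`-even if `f(n) = f((n, r^s)_s)` for all `n`. -/
def IsRSEven (s r : ℕ) (f : ℕ → ℂ) : Prop := ∀ n, f n = f (ggcd s n (r ^ s))

/-! Möbius inversion over the divisors `d ∣ r` with `d ^ s ∣ j` detects `(j, r^s)_s = 1`, because
these `d` are exactly the divisors of the `g` with `(j, r^s)_s = g^s`. Interchanging the sums, the
sum over the multiples `j` of `d^s` is a complete sum of `(r/d)^s`-th roots of unity, which is
`(r/d)^s` or `0` according as `(r/d)^s ∣ n`; replacing `d` by `r/d` gives the formula. -/

open scoped ArithmeticFunction.Moebius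

theorem sum_divisors_moebius {R : Type*} [Ring R] (g : ℕ) :
    ∑ d ∈ g.divisors, (μ d : R) = if g = 1 then 1 else 0 := by
  have h := congrArg (· g) (ArithmeticFunction.coe_moebius_mul_coe_zeta (R := R))
  rw [ArithmeticFunction.coe_mul_zeta_apply, ArithmeticFunction.one_apply] at h
  simpa using h

/-- These divisors are closed under `lcm`, so they are the divisors of the largest one. -/
theorem exists_filter_pow_dvd_eq_divisors {r : ℕ} (hr : r ≠ 0) (s j : ℕ) :
    ∃ g : ℕ, r.divisors.filter (· ^ s ∣ j) = g.divisors := by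
  set S := r.divisors.filter (· ^ s ∣ j)
  have mem_S {d : ℕ} : d ∈ S ↔ d ∣ r ∧ d ^ s ∣ j := by simp [S, hr]
  have one_mem : 1 ∈ S := mem_S.2 ⟨one_dvd r, by simp⟩
  set g := S.max' ⟨1, one_mem⟩
  obtain ⟨hgr, hgj⟩ := mem_S.1 (S.max'_mem ⟨1, one_mem⟩)
  have hg : g ≠ 0 := ne_zero_of_dvd_ne_zero hr hgr
  refine ⟨g, Finset.ext fun d => ?_⟩
  rw [mem_S, Nat.mem_divisors]
  constructor
  · rintro ⟨hdr, hdj⟩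
    have hlcm : Nat.lcm d g ∈ S :=
      mem_S.2 ⟨Nat.lcm_dvd hdr hgr, Nat.pow_lcm_pow ▸ Nat.lcm_dvd hdj hgj⟩
    have hlcm_eq : Nat.lcm d g = g :=
      le_antisymm (S.le_max' _ hlcm) (Nat.le_of_dvd (Nat.pos_of_ne_zero
        (Nat.lcm_ne_zero (ne_zero_of_dvd_ne_zero hr hdr) hg)) (Nat.dvd_lcm_right d g))
    exact ⟨hlcm_eq ▸ Nat.dvd_lcm_left d g, hg⟩
  · rintro ⟨hdg, -⟩
    exact ⟨hdg.trans hgr, (pow_dvd_pow_of_dvd hdg s).trans hgj⟩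

theorem ggcd_eq_pow_of_filter_eq_divisors {s r j g : ℕ} (hs : s ≠ 0) (hr : r ≠ 0)
    (hg : r.divisors.filter (· ^ s ∣ j) = g.divisors) :
    ggcd s j (r ^ s) = g ^ s := by
  have mem_g {d : ℕ} : d ∣ g ∧ g ≠ 0 ↔ d ∣ r ∧ d ^ s ∣ j := by
    rw [← Nat.mem_divisors, ← hg]; simp [hr]
  have hg0 : g ≠ 0 := (mem_g.2 ⟨one_dvd r, by simp⟩).2
  obtain ⟨hgr, hgj⟩ := mem_g.1 ⟨dvd_rfl, hg0⟩
  refine IsGreatest.csSup_eq ⟨⟨⟨g, rfl⟩, hgj, pow_dvd_pow_of_dvd hgr s⟩, ?_⟩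
  rintro _ ⟨⟨l, rfl⟩, hlj, hlr⟩
  exact Nat.pow_le_pow_left (Nat.le_of_dvd (Nat.pos_of_ne_zero hg0)
    (mem_g.2 ⟨(Nat.pow_dvd_pow_iff hs).1 hlr, hlj⟩).1) s

theorem sum_moebius_filter_pow_dvd {R : Type*} [Ring R] {s r : ℕ} (hs : s ≠ 0) (hr : r ≠ 0)
    (j : ℕ) :
    ∑ d ∈ r.divisors.filter (· ^ s ∣ j), (μ d : R) = if ggcd s j (r ^ s) = 1 then 1 else 0 := by
  obtain ⟨g, hg⟩ := exists_filter_pow_dvd_eq_divisors hr s j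
  simp only [hg, sum_divisors_moebius, ggcd_eq_pow_of_filter_eq_divisors hs hr hg, Nat.pow_eq_one,
    hs, or_false]

theorem sum_Icc_exp_mul_div (m a : ℕ) (hm : m ≠ 0) :
    ∑ k ∈ Icc 1 m, Complex.exp (2 * Real.pi * Complex.I * a * k / m) =
      if m ∣ a then (m : ℂ) else 0 := by
  set ζ := Complex.exp (2 * Real.pi * Complex.I / m)
  have hζ : IsPrimitiveRoot ζ m := Complex.isPrimitiveRoot_exp m hm
  have hterm (k : ℕ) : Complex.exp (2 * Real.pi * Complex.I * a * k / m) = (ζ ^ a) ^ k := by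
    rw [← pow_mul, ← Complex.exp_nat_mul]; push_cast; ring_nf
  simp only [hterm]
  split_ifs with hma
  · simp [(hζ.pow_eq_one_iff_dvd a).2 hma]
  · have hz : ζ ^ a ≠ 1 := mt (hζ.pow_eq_one_iff_dvd a).1 hma
    have hzm : (ζ ^ a) ^ m = 1 := by
      rw [← pow_mul, mul_comm, pow_mul, hζ.pow_eq_one, one_pow]
    rw [← Finset.Ico_add_one_right_eq_Icc, sum_Ico_eq_sum_range, Nat.add_sub_cancel]
    simp only [pow_add, pow_one, ← mul_sum, geom_sum_eq hz, hzm, sub_self, zero_div, mul_zero]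

theorem sum_filter_dvd_Icc_mul {M : Type*} [AddCommMonoid M] (f : ℕ → M) {a : ℕ} (ha : a ≠ 0)
    (b : ℕ) : ∑ j ∈ (Icc 1 (a * b)).filter (a ∣ ·), f j = ∑ k ∈ Icc 1 b, f (a * k) := by
  have ha' : 0 < a := Nat.pos_of_ne_zero ha
  symm
  refine sum_nbij' (a * ·) (· / a) ?_ ?_ (fun k _ => Nat.mul_div_cancel_left k ha') ?_
    (fun _ _ => rfl)
  · intro k hk
    simp only [mem_filter, mem_Icc] at hk ⊢
    exact ⟨⟨Nat.one_le_iff_ne_zero.2 (mul_ne_zero ha (by omega)), Nat.mul_le_mul_left a hk.2⟩,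
      dvd_mul_right a k⟩
  · rintro j hj
    simp only [mem_filter, mem_Icc] at hj ⊢
    obtain ⟨⟨h1, h2⟩, c, rfl⟩ := hj
    rw [Nat.mul_div_cancel_left c ha']
    exact ⟨Nat.pos_of_ne_zero (right_ne_zero_of_mul (a := a) (by omega)),
      Nat.le_of_mul_le_mul_left h2 ha'⟩
  · rintro j hj
    exact Nat.mul_div_cancel' (mem_filter.1 hj).2

theorem sum_filter_pow_dvd_exp {r d : ℕ} (hr : r ≠ 0) (hd : d ∣ r) (s n : ℕ) :
    ∑ j ∈ (Icc 1 (r ^ s)).filter (d ^ s ∣ ·),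
      Complex.exp (2 * Real.pi * Complex.I * n * j / (r ^ s)) =
      if (r / d) ^ s ∣ n then (((r / d) ^ s : ℕ) : ℂ) else 0 := by
  obtain ⟨e, rfl⟩ := hd
  obtain ⟨hd0, he0⟩ := mul_ne_zero_iff.1 hr
  rw [Nat.mul_div_cancel_left e (Nat.pos_of_ne_zero hd0),
    ← sum_Icc_exp_mul_div _ n (pow_ne_zero s he0), mul_pow,
    sum_filter_dvd_Icc_mul _ (pow_ne_zero s hd0)]
  refine sum_congr rfl fun k _ => ?_
  congr 1
  push_cast
  field_simp
  ring

theorem stmt0_general (n r s : ℕ) (hr : 0 < r) (hs : 1 ≤ s) :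
    crs s r n =
      ∑ d ∈ r.divisors.filter (fun d => d ^ s ∣ n),
        (d : ℂ) ^ s * ((ArithmeticFunction.moebius (r / d) : ℤ) : ℂ) := by
  have hs0 : s ≠ 0 := by omega
  calc crs s r n
      = ∑ j ∈ Icc 1 (r ^ s), ∑ d ∈ r.divisors, if d ^ s ∣ j then
          (μ d : ℂ) * Complex.exp (2 * Real.pi * Complex.I * n * j / (r ^ s)) else 0 := by
        rw [crs]
        refine sum_congr rfl fun j _ => ?_
        rw [← sum_filter, ← sum_mul, sum_moebius_filter_pow_dvd hs0 hr.ne', ite_mul, one_mul,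
          zero_mul]
    _ = ∑ d ∈ r.divisors,
          (μ d : ℂ) * if (r / d) ^ s ∣ n then (((r / d) ^ s : ℕ) : ℂ) else 0 := by
        rw [sum_comm]
        refine sum_congr rfl fun d hd => ?_
        rw [← sum_filter, ← mul_sum, sum_filter_pow_dvd_exp hr.ne' (Nat.dvd_of_mem_divisors hd)]
    _ = ∑ d ∈ r.divisors, (μ (r / d) : ℂ) * if d ^ s ∣ n then ((d ^ s : ℕ) : ℂ) else 0 := by
        rw [← Nat.sum_div_divisors r]
        refine sum_congr rfl fun d hd => ?_
        rw [Nat.div_div_self (Nat.dvd_of_mem_divisors hd) hr.ne']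
    _ = _ := by
        rw [sum_filter]
        refine sum_congr rfl fun d _ => ?_
        split_ifs <;> push_cast <;> ring

theorem stmt0 (n r s : ℕ) (hn : 0 < n) (hr : 0 < r) (hs : 1 ≤ s) :
    crs s r n =
      ∑ d ∈ r.divisors.filter (fun d => d ^ s ∣ n),
        (d : ℂ) ^ s * ((ArithmeticFunction.moebius (r / d) : ℤ) : ℂ) :=
  stmt0_general n r s hr hs
end

section
/- Let f be an (r,s)-even function. Then the discrete Fourier transform f̂(n) = Σ_{k=1}^{r^s} f(k) exp(-2πi·kn/r^s) equals Σ_{d | r} f(d^s) c_{r/d, s}(n), where c_{r,s} is the generalized Ramanujan sum. -/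
open Finset

/-! Group the `k ∈ [1, r^s]` by the value `d^s` (`d ∣ r`) of `(k, r^s)_s`; an `(r,s)`-even `f`
is constant on each class. Homogeneity `(c^s a, c^s b)_s = c^s (a, b)_s` identifies the class
of `d^s` with `d^s` times the `j ∈ [1, (r/d)^s]` with `(j, (r/d)^s)_s = 1`, so its exponential
sum is that of `c_{r/d,s}(n)` with the opposite sign in the exponent; the reflection
`j ↦ (r/d)^s - j`, which preserves `(j, (r/d)^s)_s`, flips the sign back. -/

section ggcd

variable {s a b : ℕ}

lemma bddAbove_ggcd_set (hb : b ≠ 0) :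
    BddAbove {m : ℕ | (∃ l : ℕ, m = l ^ s) ∧ m ∣ a ∧ m ∣ b} :=
  ⟨b, fun _ hm => Nat.le_of_dvd (Nat.pos_of_ne_zero hb) hm.2.2⟩

lemma ggcd_spec (hb : b ≠ 0) :
    (∃ l, ggcd s a b = l ^ s) ∧ ggcd s a b ∣ a ∧ ggcd s a b ∣ b := by
  refine Nat.sSup_mem ?_ (bddAbove_ggcd_set hb)
  exact ⟨1, ⟨1, (one_pow s).symm⟩, one_dvd a, one_dvd b⟩

lemma pow_le_ggcd {l : ℕ} (hb : b ≠ 0) (hla : l ^ s ∣ a) (hlb : l ^ s ∣ b) :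
    l ^ s ≤ ggcd s a b :=
  le_csSup (bddAbove_ggcd_set hb) ⟨⟨l, rfl⟩, hla, hlb⟩

/-- If `m ^ s` is the largest `s`-th power dividing `a` and `b`, then so does
`lcm l m ^ s = lcm (l ^ s) (m ^ s)` for any other one `l ^ s`, which forces `l ∣ m`. -/
lemma pow_dvd_ggcd_iff {l : ℕ} (hs : s ≠ 0) (hb : b ≠ 0) :
    l ^ s ∣ ggcd s a b ↔ l ^ s ∣ a ∧ l ^ s ∣ b := by
  obtain ⟨⟨m, hm⟩, hma, hmb⟩ := ggcd_spec (s := s) (a := a) hb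
  refine ⟨fun h => ⟨h.trans hma, h.trans hmb⟩, fun ⟨hla, hlb⟩ => ?_⟩
  rw [hm] at hma hmb ⊢
  have hm0 : m ≠ 0 := by rintro rfl; simp [zero_pow hs, hb] at hmb
  have hl0 : l ≠ 0 := by rintro rfl; simp [zero_pow hs, hb] at hlb
  have hlcm : (l.lcm m) ^ s ≤ m ^ s := by
    rw [← hm]
    exact pow_le_ggcd hb (Nat.pow_lcm_pow ▸ Nat.lcm_dvd hla hma)
      (Nat.pow_lcm_pow ▸ Nat.lcm_dvd hlb hmb)
  have hlcm_eq : l.lcm m = m :=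
    le_antisymm ((Nat.pow_le_pow_iff_left hs).1 hlcm)
      (Nat.le_of_dvd (Nat.pos_of_ne_zero (Nat.lcm_ne_zero hl0 hm0)) (Nat.dvd_lcm_right l m))
  exact pow_dvd_pow_of_dvd (hlcm_eq ▸ Nat.dvd_lcm_left l m) s

lemma ggcd_pow_mul_left {c : ℕ} (hs : s ≠ 0) (hc : c ≠ 0) (hb : b ≠ 0) :
    ggcd s (c ^ s * a) (c ^ s * b) = c ^ s * ggcd s a b := by
  have hcb : c ^ s * b ≠ 0 := mul_ne_zero (pow_ne_zero s hc) hb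
  obtain ⟨⟨t, ht⟩, hta, htb⟩ := ggcd_spec (s := s) (a := a) hb
  obtain ⟨⟨u, hu⟩, hua, hub⟩ := ggcd_spec (s := s) (a := c ^ s * a) hcb
  refine Nat.dvd_antisymm ?_ ?_
  · have hcu : c ∣ u := by
      rw [← Nat.pow_dvd_pow_iff hs, ← hu, pow_dvd_ggcd_iff hs hcb]
      exact ⟨dvd_mul_right _ _, dvd_mul_right _ _⟩
    obtain ⟨v, rfl⟩ := hcu
    rw [hu, mul_pow] at hua hub ⊢
    have hpc : 0 < c ^ s := pow_pos (Nat.pos_of_ne_zero hc) s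
    refine Nat.mul_dvd_mul_left _ ((pow_dvd_ggcd_iff hs hb).2
      ⟨Nat.dvd_of_mul_dvd_mul_left hpc hua, Nat.dvd_of_mul_dvd_mul_left hpc hub⟩)
  · rw [ht, ← mul_pow, pow_dvd_ggcd_iff hs hcb, mul_pow, ← ht]
    exact ⟨Nat.mul_dvd_mul_left _ hta, Nat.mul_dvd_mul_left _ htb⟩

lemma ggcd_self_sub_left {j : ℕ} (hj : j ≤ b) : ggcd s (b - j) b = ggcd s j b := by
  unfold ggcd
  congr 1
  ext m
  exact and_congr_right fun _ => and_congr_left (Nat.dvd_sub_iff_right hj)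

lemma exists_mem_divisors_ggcd_eq_pow {r : ℕ} (hs : s ≠ 0) (hr : r ≠ 0) (k : ℕ) :
    ∃ d ∈ r.divisors, ggcd s k (r ^ s) = d ^ s := by
  obtain ⟨⟨d, hd⟩, -, hdr⟩ := ggcd_spec (s := s) (a := k) (pow_ne_zero s hr)
  exact ⟨d, Nat.mem_divisors.2 ⟨(Nat.pow_dvd_pow_iff hs).1 (hd ▸ hdr), hr⟩, hd⟩

lemma ggcd_eq_pow_iff {d e k : ℕ} (hs : s ≠ 0) (hd : d ≠ 0) (he : e ≠ 0) :
    ggcd s k ((d * e) ^ s) = d ^ s ↔ ∃ j, ggcd s j (e ^ s) = 1 ∧ d ^ s * j = k := by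
  have hds : d ^ s ≠ 0 := pow_ne_zero s hd
  constructor
  · intro h
    obtain ⟨j, rfl⟩ : d ^ s ∣ k := h ▸ (ggcd_spec (pow_ne_zero s (mul_ne_zero hd he))).2.1
    rw [mul_pow, ggcd_pow_mul_left hs hd (pow_ne_zero s he)] at h
    exact ⟨j, (mul_eq_left₀ hds).1 h, rfl⟩
  · rintro ⟨j, hj, rfl⟩
    rw [mul_pow, ggcd_pow_mul_left hs hd (pow_ne_zero s he), hj, mul_one]

end ggcd

lemma Finset.sum_Icc_one_reflect {M : Type*} [AddCommMonoid M] (N : ℕ) (h : ℕ → M)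
    (h0 : h 0 = h N) : ∑ k ∈ Icc 1 N, h (N - k) = ∑ k ∈ Icc 1 N, h k := by
  rw [← Ico_add_one_right_eq_Icc, sum_Ico_eq_sum_range, sum_Ico_eq_sum_range, Nat.add_sub_cancel]
  simp only [Nat.sub_add_eq]
  rw [sum_range_reflect h]
  simp only [add_comm 1]
  cases N with
  | zero => rfl
  | succ m => rw [sum_range_succ' h, sum_range_succ (fun k => h (k + 1)), h0]

lemma sum_eq_sum_divisors_sum_ggcd_eq {M : Type*} [AddCommMonoid M] {s r : ℕ} (hs : s ≠ 0)
    (hr : r ≠ 0) (A : Finset ℕ) (F : ℕ → M) :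
    ∑ k ∈ A, F k = ∑ d ∈ r.divisors, ∑ k ∈ A with ggcd s k (r ^ s) = d ^ s, F k := by
  rw [← sum_image (Nat.pow_left_injective hs).injOn
    (f := fun m => ∑ k ∈ A with ggcd s k (r ^ s) = m, F k)]
  refine (sum_fiberwise_of_maps_to (fun k _ => ?_) F).symm
  obtain ⟨d, hd, h⟩ := exists_mem_divisors_ggcd_eq_pow hs hr k
  exact mem_image.2 ⟨d, hd, h.symm⟩

lemma filter_Icc_ggcd_eq_pow_eq_image {s d e : ℕ} (hs : s ≠ 0) (hd : d ≠ 0) (he : e ≠ 0) :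
    {k ∈ Icc 1 ((d * e) ^ s) | ggcd s k ((d * e) ^ s) = d ^ s}
      = {j ∈ Icc 1 (e ^ s) | ggcd s j (e ^ s) = 1}.image (d ^ s * ·) := by
  have hds : 0 < d ^ s := pow_pos (Nat.pos_of_ne_zero hd) s
  have hbounds (j : ℕ) :
      (1 ≤ d ^ s * j ∧ d ^ s * j ≤ (d * e) ^ s) ↔ (1 ≤ j ∧ j ≤ e ^ s) := by
    rw [mul_pow, Nat.mul_le_mul_left_iff hds, Nat.one_le_iff_ne_zero, Nat.one_le_iff_ne_zero,
      mul_ne_zero_iff, and_iff_right hds.ne']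
  ext k
  simp only [mem_filter, mem_image, mem_Icc, ggcd_eq_pow_iff hs hd he]
  constructor
  · rintro ⟨hk, j, hj, rfl⟩
    exact ⟨j, ⟨(hbounds j).1 hk, hj⟩, rfl⟩
  · rintro ⟨j, ⟨hjI, hj⟩, rfl⟩
    exact ⟨(hbounds j).2 hjI, j, hj, rfl⟩

open Complex Real in
lemma Complex.exp_two_pi_I_mul_sub_div {x : ℂ} (hx : x ≠ 0) (n : ℕ) (k : ℂ) :
    exp (2 * π * I * n * (x - k) / x) = exp (-(2 * π * I * k * n / x)) := by
  rw [show 2 * π * I * n * (x - k) / x = n * (2 * π * I) + -(2 * π * I * k * n / x) by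
    field_simp; ring, exp_add, exp_nat_mul_two_pi_mul_I, one_mul]

open Complex Real in
lemma crs_eq_sum_exp_neg (s e n : ℕ) :
    crs s e n = ∑ j ∈ Icc 1 (e ^ s) with ggcd s j (e ^ s) = 1,
      exp (-(2 * π * I * j * n / (e : ℂ) ^ s)) := by
  rw [crs, sum_filter, ← sum_Icc_one_reflect]
  · refine sum_congr rfl fun j hj => ?_
    obtain ⟨hj1, hje⟩ := mem_Icc.1 hj
    have he : (e : ℂ) ^ s ≠ 0 := by exact_mod_cast Nat.one_le_iff_ne_zero.1 (hj1.trans hje)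
    rw [ggcd_self_sub_left hje, Nat.cast_sub hje, Nat.cast_pow, exp_two_pi_I_mul_sub_div he]
  · rw [← ggcd_self_sub_left (le_refl (e ^ s)), Nat.sub_self]
    split_ifs
    · rcases eq_or_ne ((e : ℂ) ^ s) 0 with he | he
      · simp [he]
      · rw [Nat.cast_pow, mul_div_cancel_right₀ _ he, Nat.cast_zero, mul_zero, zero_div,
          Complex.exp_zero, ← exp_nat_mul_two_pi_mul_I n, mul_comm]
    · rfl

theorem stmt3 (s r : ℕ) (hs : 0 < s) (hr : 0 < r) (f : ℕ → ℂ)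
    (hf : IsRSEven s r f) (n : ℕ) :
    dft s r f n = ∑ d ∈ r.divisors, f (d ^ s) * crs s (r / d) n := by
  rw [dft, sum_eq_sum_divisors_sum_ggcd_eq hs.ne' hr.ne']
  refine sum_congr rfl fun d hd => ?_
  obtain ⟨⟨e, rfl⟩, hde⟩ := Nat.mem_divisors.1 hd
  have hd0 : d ≠ 0 := left_ne_zero_of_mul hde
  have he0 : e ≠ 0 := right_ne_zero_of_mul hde
  rw [sum_congr rfl fun k hk => by rw [hf k, (mem_filter.1 hk).2], ← mul_sum,
    filter_Icc_ggcd_eq_pow_eq_image hs.ne' hd0 he0,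
    sum_image (mul_right_injective₀ (pow_ne_zero s hd0)).injOn,
    crs_eq_sum_exp_neg, Nat.mul_div_cancel_left _ (Nat.pos_of_ne_zero hd0)]
  congr 1
  refine sum_congr rfl fun j _ => ?_
  push_cast
  congr 1
  rw [mul_pow]
  field_simp
end

section
/- For all positive integers r and s: Σ_{n=1}^{r^s} (c_{r,s}(n))² = r^s · J_s(r^s), where J_s(r^s) = r^s ∏_{p | r}(1 − p^{−s}). -/
open Finset

/-- `J_s(r^s)`: the number of `j` with `1 ≤ j ≤ r^s` and `(j,r^s)_s = 1`. -/
noncomputable def jcount (s m : ℕ) : ℕ :=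
  Nat.card {n : ℕ // 1 ≤ n ∧ n ≤ m ∧ ggcd s n m = 1}

/-!
Expanding the square and summing over `n` first, orthogonality of the characters
`n ↦ e(n j / M)` leaves `M` times the number of pairs `(j, k)` in the summation set with
`M ∣ j + k`. Since `(j, M)_s` only depends on which divisors of `M` divide `j`, the set of `j`
with `(j, M)_s = 1` is closed under `j ↦ -j mod M`, so each `j` has exactly one partner `k`.
-/

open Complex
open scoped Real

lemma sum_Icc_exp_two_pi_I_mul_div (m k : ℕ) :
    ∑ n ∈ Icc 1 m, exp (2 * π * I * n * k / m) = if m ∣ k then (m : ℂ) else 0 := by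
  rcases m.eq_zero_or_pos with rfl | hm
  · simp
  have hζ := isPrimitiveRoot_exp m hm.ne'
  set ζ := exp (2 * π * I / m)
  set w := ζ ^ k
  have hterm (n : ℕ) : exp (2 * π * I * n * k / m) = w ^ n := by
    rw [← pow_mul, ← exp_nat_mul]
    push_cast
    ring_nf
  have hsum : ∑ n ∈ Icc 1 m, w ^ n = w * ∑ i ∈ range m, w ^ i := by
    rw [← Ico_add_one_right_eq_Icc, sum_Ico_eq_sum_range, mul_sum, Nat.add_sub_cancel]
    exact sum_congr rfl fun i _ => by ring
  simp_rw [hterm, hsum]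
  split_ifs with hk
  · have hw : w = 1 := (hζ.pow_eq_one_iff_dvd k).2 hk
    simp [hw]
  · have hw : w ≠ 1 := mt (hζ.pow_eq_one_iff_dvd k).1 hk
    have hwm : w ^ m = 1 := by rw [← pow_mul, mul_comm, pow_mul, hζ.pow_eq_one, one_pow]
    rw [geom_sum_eq hw, hwm, sub_self, zero_div, mul_zero]

lemma existsUnique_dvd_add_mem_Icc {M j : ℕ} (hj : j ∈ Icc 1 M) :
    ∃! k, k ∈ Icc 1 M ∧ M ∣ j + k := by
  rw [mem_Icc] at hj
  refine ⟨if j = M then M else M - j, ?_, ?_⟩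
  · split_ifs with h
    · exact ⟨mem_Icc.2 ⟨hj.1.trans hj.2, le_rfl⟩, ⟨2, by omega⟩⟩
    · exact ⟨mem_Icc.2 ⟨by omega, by omega⟩, ⟨1, by omega⟩⟩
  · rintro k ⟨hk, c, hc⟩
    rw [mem_Icc] at hk
    have hc2 : c ≤ 2 := Nat.le_of_mul_le_mul_left (show M * c ≤ M * 2 by omega) (by omega)
    interval_cases c <;> split_ifs <;> omega

lemma ggcd_eq_of_dvd_add {s m a b : ℕ} (h : m ∣ a + b) : ggcd s a m = ggcd s b m := by
  unfold ggcd
  congr 1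
  ext d
  simp only [Set.mem_ofPred_eq]
  constructor
  · rintro ⟨hpow, hda, hdm⟩
    exact ⟨hpow, (Nat.dvd_add_right hda).1 (hdm.trans h), hdm⟩
  · rintro ⟨hpow, hdb, hdm⟩
    exact ⟨hpow, (Nat.dvd_add_left hdb).1 (hdm.trans h), hdm⟩

lemma jcount_eq_card_filter (s m : ℕ) : jcount s m = #{n ∈ Icc 1 m | ggcd s n m = 1} := by
  rw [jcount, ← Nat.card_eq_finsetCard]
  exact Nat.card_congr (Equiv.subtypeEquivRight fun n => by simp [and_assoc])

theorem sum_sq_sum_exp_eq_mul_card {M : ℕ} {S : Finset ℕ} (hS : S ⊆ Icc 1 M)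
    (hneg : ∀ j ∈ S, ∀ k ∈ Icc 1 M, M ∣ j + k → k ∈ S) :
    ∑ n ∈ Icc 1 M, (∑ j ∈ S, exp (2 * π * I * n * j / M)) ^ 2 = M * #S := by
  have hpartner (j) (hj : j ∈ S) : #{k ∈ S | M ∣ j + k} = 1 := by
    obtain ⟨k, ⟨hk, hdvd⟩, huniq⟩ := existsUnique_dvd_add_mem_Icc (hS hj)
    refine card_eq_one.2 ⟨k, ?_⟩
    ext k'
    simp only [mem_filter, mem_singleton]
    exact ⟨fun h => huniq k' ⟨hS h.1, h.2⟩, fun h => h ▸ ⟨hneg j hj k hk hdvd, hdvd⟩⟩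
  calc ∑ n ∈ Icc 1 M, (∑ j ∈ S, exp (2 * π * I * n * j / M)) ^ 2
      = ∑ j ∈ S, ∑ k ∈ S, ∑ n ∈ Icc 1 M, exp (2 * π * I * n * (j + k : ℕ) / M) := by
        simp_rw [sq, sum_mul_sum, ← exp_add]
        rw [sum_comm]
        refine sum_congr rfl fun j _ => ?_
        rw [sum_comm]
        push_cast
        simp only [mul_add, add_div]
    _ = ∑ j ∈ S, ∑ k ∈ S, if M ∣ j + k then (M : ℂ) else 0 := by
        simp_rw [sum_Icc_exp_two_pi_I_mul_div]
    _ = ∑ j ∈ S, (M : ℂ) := by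
        refine sum_congr rfl fun j hj => ?_
        rw [← sum_filter, sum_const, hpartner j hj, one_smul]
    _ = M * #S := by rw [sum_const, nsmul_eq_mul, mul_comm]

theorem stmt14_general (s r : ℕ) :
    ∑ n ∈ Finset.Icc 1 (r ^ s), (crs s r n) ^ 2 =
      (r : ℂ) ^ s * (jcount s (r ^ s) : ℂ) := by
  have hcrs (n : ℕ) : crs s r n =
      ∑ j ∈ Icc 1 (r ^ s) with ggcd s j (r ^ s) = 1, exp (2 * π * I * n * j / (r ^ s : ℕ)) := by
    rw [crs, sum_filter, Nat.cast_pow]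
  simp_rw [hcrs]
  rw [sum_sq_sum_exp_eq_mul_card (filter_subset _ _), jcount_eq_card_filter, Nat.cast_pow]
  simp only [mem_filter]
  exact fun j hj k hk hdvd => ⟨hk, (ggcd_eq_of_dvd_add (add_comm j k ▸ hdvd)).trans hj.2⟩

theorem stmt14 (s r : ℕ) (hs : 0 < s) (hr : 0 < r) :
    ∑ n ∈ Finset.Icc 1 (r ^ s), (crs s r n) ^ 2 =
      (r : ℂ) ^ s * (jcount s (r ^ s) : ℂ) :=
  stmt14_general s r
end

section
/- Let (f_r)_{r≥1} be a family of functions with each f_r (r,s)-even and r ↦ f_r(n) multiplicative for each fixed n (i.e., f_{qr}(n) = f_q(n) f_r(n) when gcd(q,r) = 1). Then f(n,r) := f_r(n) is multiplicative as a function of two variables: f(n₁n₂, r₁r₂) = f(n₁,r₁) f(n₂,r₂) whenever gcd(n₁r₁, n₂r₂) = 1. -/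
open Finset

/-! An `(r,s)`-even function only sees the part of its argument that shares
factors with `r`. So when `gcd(n₁r₁, n₂r₂) = 1`, `f_{r₁}(n₁n₂) = f_{r₁}(n₁)` and
`f_{r₂}(n₁n₂) = f_{r₂}(n₂)`, and multiplicativity in `r` gives the claim. -/

lemma ggcd_mul_right_of_coprime (s a b r : ℕ) (h : Nat.Coprime b r) :
    ggcd s (a * b) (r ^ s) = ggcd s a (r ^ s) := by
  unfold ggcd
  congr 1
  ext m
  refine and_congr_right fun _ => ⟨fun ⟨hab, hr⟩ => ⟨?_, hr⟩, fun ⟨ha, hr⟩ => ⟨ha.mul_right b, hr⟩⟩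
  have hmb : Nat.Coprime m b := ((h.pow_right s).coprime_dvd_right hr).symm
  exact hmb.dvd_of_dvd_mul_right hab

lemma IsRSEven.apply_mul_of_coprime_right {s r : ℕ} {f : ℕ → ℂ} (hf : IsRSEven s r f)
    (a : ℕ) {b : ℕ} (h : Nat.Coprime b r) : f (a * b) = f a := by
  rw [hf, ggcd_mul_right_of_coprime s a b r h, ← hf]

lemma IsRSEven.apply_mul_of_coprime_left {s r : ℕ} {f : ℕ → ℂ} (hf : IsRSEven s r f)
    {a : ℕ} (b : ℕ) (h : Nat.Coprime a r) : f (a * b) = f b := by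
  rw [mul_comm, hf.apply_mul_of_coprime_right b h]

theorem stmt15_general (s : ℕ) (f : ℕ → ℕ → ℂ)
    (heven : ∀ r : ℕ, 0 < r → IsRSEven s r (f r))
    (hmult : ∀ q r n : ℕ, 0 < q → 0 < r → Nat.Coprime q r → f (q * r) n = f q n * f r n) :
    ∀ n₁ n₂ r₁ r₂ : ℕ, 0 < n₁ → 0 < n₂ → 0 < r₁ → 0 < r₂ →
      Nat.Coprime (n₁ * r₁) (n₂ * r₂) →
      f (r₁ * r₂) (n₁ * n₂) = f r₁ n₁ * f r₂ n₂ := by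
  intro n₁ n₂ r₁ r₂ _ _ hr₁ hr₂ hcop
  have hr₁r₂ : Nat.Coprime r₁ r₂ := hcop.coprime_mul_left.coprime_mul_left_right
  have hn₂r₁ : Nat.Coprime n₂ r₁ := hcop.coprime_mul_left.coprime_mul_right_right.symm
  have hn₁r₂ : Nat.Coprime n₁ r₂ := hcop.coprime_mul_right.coprime_mul_left_right
  rw [hmult r₁ r₂ _ hr₁ hr₂ hr₁r₂, (heven r₁ hr₁).apply_mul_of_coprime_right n₁ hn₂r₁,
    (heven r₂ hr₂).apply_mul_of_coprime_left n₂ hn₁r₂]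

theorem stmt15 (s : ℕ) (hs : 0 < s) (f : ℕ → ℕ → ℂ)
    (heven : ∀ r : ℕ, 0 < r → IsRSEven s r (f r))
    (hmult : ∀ q r n : ℕ, 0 < q → 0 < r → Nat.Coprime q r → f (q * r) n = f q n * f r n) :
    ∀ n₁ n₂ r₁ r₂ : ℕ, 0 < n₁ → 0 < n₂ → 0 < r₁ → 0 < r₂ →
      Nat.Coprime (n₁ * r₁) (n₂ * r₂) →
      f (r₁ * r₂) (n₁ * n₂) = f r₁ n₁ * f r₂ n₂ :=
  stmt15_general s f heven hmult
end

section
/- Let (f_r) be a family with each f_r (r,s)-even and r ↦ f_r(n) multiplicative for fixed n. Then r ↦ f̂_r(n) is multiplicative: f̂_{qr}(n) = f̂_q(n) f̂_r(n) whenever gcd(q,r) = 1, where f̂_r(n) = Σ_{k=1}^{r^s} f_r(k) e^{-2πikn/r^s}. -/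
open Finset

/-
Write `Q = q^s` and `R = r^s`. Each summand of `f̂_r(n)` is `r^s`-periodic in `k`, and since `Q`
and `R` are coprime, the numbers `aR + bQ` with `a < Q`, `b < R` form a complete residue system
modulo `QR`. Evenness gives `f_q(aR + bQ) = f_q(a)` (as `R` is a unit modulo `Q`) and likewise
`f_r(aR + bQ) = f_r(b)`, multiplicativity gives `f_{qr} = f_q f_r`, and
`(aR + bQ)/(QR) = a/Q + b/R` splits the exponential, so the sum for `qr` factors.
-/

open Function

lemma ggcd_congr {s k a M : ℕ} (h : ∀ m, m ∣ M → (m ∣ k ↔ m ∣ a)) :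
    ggcd s k M = ggcd s a M := by
  unfold ggcd
  congr 1
  ext m
  exact and_congr_right fun _ =>
    ⟨fun ⟨hk, hM⟩ => ⟨(h m hM).1 hk, hM⟩, fun ⟨ha, hM⟩ => ⟨(h m hM).2 ha, hM⟩⟩

namespace IsRSEven

variable {s r : ℕ} {f : ℕ → ℂ}

lemma apply_eq_of_modEq (hf : IsRSEven s r f) {k a : ℕ} (h : k ≡ a [MOD r ^ s]) :
    f k = f a := by
  rw [hf k, hf a, ggcd_congr fun m hm => h.dvd_iff hm]

lemma apply_mul_of_coprime (hf : IsRSEven s r f) (k : ℕ) {u : ℕ} (hu : Nat.Coprime u (r ^ s)) :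
    f (k * u) = f k := by
  rw [hf (k * u), hf k,
    ggcd_congr fun m hm => (Nat.Coprime.coprime_dvd_left hm hu.symm).dvd_mul_right]

end IsRSEven

lemma Function.Periodic.sum_Icc_one_eq_sum_range {M : Type*} [AddCancelCommMonoid M]
    {h : ℕ → M} {N : ℕ} (hh : Periodic h N) :
    ∑ k ∈ Icc 1 N, h k = ∑ k ∈ range N, h k := by
  have hshift : ∑ k ∈ Icc 1 N, h k = ∑ k ∈ range N, h (k + 1) := by
    rw [range_eq_Ico, sum_Ico_add', ← Ico_add_one_right_eq_Icc, zero_add]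
  apply add_right_cancel (b := h 0)
  rw [hshift, ← sum_range_succ', sum_range_succ, ← zero_add N, hh 0]

lemma Nat.modEq_of_mul_add_mul_modEq {Q R a b a' b' : ℕ} (hQR : Nat.Coprime Q R)
    (h : a * R + b * Q ≡ a' * R + b' * Q [MOD Q * R]) : a ≡ a' [MOD Q] := by
  have hQ : ∀ c x, x + c * Q ≡ x [MOD Q] := fun c x => Nat.add_mul_mod_self_right x c Q
  exact Nat.ModEq.cancel_right_of_coprime hQR
    ((hQ b _).symm.trans ((h.of_mul_right R).trans (hQ b' _)))

/-- The Chinese remainder theorem, as a reindexing of a sum over a full period. -/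
lemma Function.Periodic.sum_range_mul_eq_sum_range_sum_range {M : Type*} [AddCommMonoid M]
    {h : ℕ → M} {Q R : ℕ} (hQR : Nat.Coprime Q R) (hh : Periodic h (Q * R)) :
    ∑ k ∈ range (Q * R), h k = ∑ a ∈ range Q, ∑ b ∈ range R, h (a * R + b * Q) := by
  obtain hQR0 | hQR0 := (Q * R).eq_zero_or_pos
  · rcases mul_eq_zero.1 hQR0 with rfl | rfl <;> simp
  rw [← sum_product']
  symm
  set i : ℕ × ℕ → ℕ := fun p => (p.1 * R + p.2 * Q) % (Q * R)
  have hmaps : ∀ p ∈ range Q ×ˢ range R, i p ∈ range (Q * R) :=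
    fun p _ => mem_range.2 (Nat.mod_lt _ hQR0)
  have hinj : Set.InjOn i ↑(range Q ×ˢ range R) := by
    rintro ⟨a, b⟩ hab ⟨a', b'⟩ hab' heq
    simp only [coe_product, Set.mem_prod, coe_range, Set.mem_Iio] at hab hab'
    have hmod : a * R + b * Q ≡ a' * R + b' * Q [MOD Q * R] := heq
    have hmod' : b * Q + a * R ≡ b' * Q + a' * R [MOD R * Q] := by
      rwa [add_comm, add_comm (b' * Q), mul_comm R]
    exact Prod.ext ((Nat.modEq_of_mul_add_mul_modEq hQR hmod).eq_of_lt_of_lt hab.1 hab'.1)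
      ((Nat.modEq_of_mul_add_mul_modEq hQR.symm hmod').eq_of_lt_of_lt hab.2 hab'.2)
  exact sum_nbij i hmaps hinj (surjOn_of_injOn_of_card_le i hmaps hinj (by simp))
    fun p _ => (hh.map_mod_nat _).symm

noncomputable def dftTerm (s r : ℕ) (f : ℕ → ℂ) (n k : ℕ) : ℂ :=
  f k * Complex.exp (-(2 * Real.pi * Complex.I * k * n / (r ^ s)))

lemma IsRSEven.periodic_dftTerm {s r : ℕ} {f : ℕ → ℂ} (hf : IsRSEven s r f) (n : ℕ) :
    Periodic (dftTerm s r f n) (r ^ s) := by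
  intro k
  unfold dftTerm
  rw [hf.apply_eq_of_modEq (Nat.add_mod_right k _)]
  congr 1
  rcases eq_or_ne ((r : ℂ) ^ s) 0 with h0 | h0
  · simp [h0]
  have hexp : -(2 * Real.pi * Complex.I * ((k + r ^ s : ℕ) : ℂ) * n / (r ^ s)) =
      -(2 * Real.pi * Complex.I * k * n / (r ^ s)) - n * (2 * Real.pi * Complex.I) := by
    push_cast
    field_simp
    ring
  rw [hexp, Complex.exp_sub, Complex.exp_nat_mul_two_pi_mul_I, div_one]

lemma IsRSEven.dft_eq_sum_range {s r : ℕ} {f : ℕ → ℂ} (hf : IsRSEven s r f) (n : ℕ) :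
    dft s r f n = ∑ k ∈ range (r ^ s), dftTerm s r f n k :=
  (hf.periodic_dftTerm n).sum_Icc_one_eq_sum_range

lemma dftTerm_mul_add_mul {s q r n : ℕ} {fq fr fqr : ℕ → ℂ} (hq : q ≠ 0) (hr : r ≠ 0)
    (hqr : Nat.Coprime q r) (hfq : IsRSEven s q fq) (hfr : IsRSEven s r fr)
    (hmul : ∀ k, fqr k = fq k * fr k) (a b : ℕ) :
    dftTerm s (q * r) fqr n (a * r ^ s + b * q ^ s) =
      dftTerm s q fq n a * dftTerm s r fr n b := by
  have hQR : Nat.Coprime (q ^ s) (r ^ s) := hqr.pow s s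
  have h1 : fq (a * r ^ s + b * q ^ s) = fq a := by
    rw [hfq.apply_eq_of_modEq (Nat.add_mul_mod_self_right _ _ _),
      hfq.apply_mul_of_coprime a hQR.symm]
  have h2 : fr (a * r ^ s + b * q ^ s) = fr b := by
    rw [add_comm, hfr.apply_eq_of_modEq (Nat.add_mul_mod_self_right _ _ _),
      hfr.apply_mul_of_coprime b hQR]
  have hexp :
      -(2 * Real.pi * Complex.I * ((a * r ^ s + b * q ^ s : ℕ) : ℂ) * n / ((q * r : ℕ) ^ s)) =
        -(2 * Real.pi * Complex.I * a * n / (q ^ s)) +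
          -(2 * Real.pi * Complex.I * b * n / (r ^ s)) := by
    push_cast
    field_simp
    ring
  rw [dftTerm, dftTerm, dftTerm, hmul, h1, h2, hexp, Complex.exp_add]
  ring

theorem stmt16_general (s : ℕ) (f : ℕ → ℕ → ℂ)
    (heven : ∀ r : ℕ, 0 < r → IsRSEven s r (f r))
    (hmult : ∀ q r n : ℕ, 0 < q → 0 < r → Nat.Coprime q r → f (q * r) n = f q n * f r n) :
    ∀ q r n : ℕ, 0 < q → 0 < r → Nat.Coprime q r →
      dft s (q * r) (f (q * r)) n = dft s q (f q) n * dft s r (f r) n := by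
  intro q r n hq hr hqr
  have hqr_even := heven (q * r) (mul_pos hq hr)
  have hperiodic := hqr_even.periodic_dftTerm n
  rw [mul_pow] at hperiodic
  calc dft s (q * r) (f (q * r)) n
      = ∑ a ∈ range (q ^ s), ∑ b ∈ range (r ^ s),
          dftTerm s (q * r) (f (q * r)) n (a * r ^ s + b * q ^ s) := by
        rw [hqr_even.dft_eq_sum_range, mul_pow,
          hperiodic.sum_range_mul_eq_sum_range_sum_range (hqr.pow s s)]
    _ = ∑ a ∈ range (q ^ s), ∑ b ∈ range (r ^ s),
          dftTerm s q (f q) n a * dftTerm s r (f r) n b := by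
        simp only [dftTerm_mul_add_mul hq.ne' hr.ne' hqr (heven q hq) (heven r hr)
          (hmult q r · hq hr hqr)]
    _ = dft s q (f q) n * dft s r (f r) n := by
        rw [(heven q hq).dft_eq_sum_range, (heven r hr).dft_eq_sum_range, sum_mul_sum]

theorem stmt16 (s : ℕ) (hs : 0 < s) (f : ℕ → ℕ → ℂ)
    (heven : ∀ r : ℕ, 0 < r → IsRSEven s r (f r))
    (hmult : ∀ q r n : ℕ, 0 < q → 0 < r → Nat.Coprime q r → f (q * r) n = f q n * f r n) :
    ∀ q r n : ℕ, 0 < q → 0 < r → Nat.Coprime q r →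
      dft s (q * r) (f (q * r)) n = dft s q (f q) n * dft s r (f r) n :=
  stmt16_general s f heven hmult
end

section
/- Generalized Hölder identity: let F be a strongly multiplicative arithmetic function (F(p^a) = F(p) for all primes p, a ≥ 1) with F(p) ≠ 1 − p^s for every prime p. Define f_r(n) = F((n,r^s)_s). Then the DFT satisfies f̂_r(n) = (F∗μ)(m) · (F∗J_s)(r) / (F∗J_s)(m), where m^s = r^s/(n,r^s)_s, ∗ is Dirichlet convolution, μ the Möbius function, and J_s the Jordan totient. -/
open Finset

/-- Dirichlet convolution of two complex-valued arithmetic functions. -/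
noncomputable def dirconv (F G : ℕ → ℂ) (n : ℕ) : ℂ := ∑ d ∈ n.divisors, F d * G (n / d)

/-- The Jordan totient `J_s(n) = n^s ∏_{p ∣ n} (1 - p^{-s})`, as a complex number. -/
noncomputable def Js (s n : ℕ) : ℂ :=
  (n : ℂ) ^ s * ∏ p ∈ n.primeFactors, (1 - (p : ℂ) ^ (-(s : ℤ)))

/-!
Write `a_k` for the largest divisor of `r` with `a_k ^ s ∣ k`, so that `(k, r^s)_s = a_k^s` and
`m = r / a_n`. Strong multiplicativity gives `F(a_k^s) = F(a_k)`, and Möbius inversion writes this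
as `∑_{d ∣ r, d^s ∣ k} (F∗μ)(d)`. Summing the additive character over the multiples of `d^s` turns
the DFT into the Dirichlet convolution `∑_{d ∣ r} (F∗μ)(d) h(r/d)` with `h(e) = e^s [e^s ∣ n]`.
This convolution and the right-hand side are both multiplicative in `r`, so it suffices to compare
them at prime powers, where `F∗μ` is supported on `1` and `p`, and
`(F∗J_s)(p^(k+1)) = p^(ks) (p^s + F(p) - 1)`, which is nonzero since `F(p) ≠ 1 - p^s`.
-/

open ArithmeticFunction
open scoped ArithmeticFunction.Moebius ArithmeticFunction.zeta

namespace ArithmeticFunction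

variable {R : Type*}

def ofFun [Zero R] (f : ℕ → R) : ArithmeticFunction R :=
  ⟨fun k => if k = 0 then 0 else f k, if_pos rfl⟩

theorem ofFun_apply [Zero R] (f : ℕ → R) {k : ℕ} (hk : k ≠ 0) : ofFun f k = f k := if_neg hk

theorem isMultiplicative_ofFun [MonoidWithZero R] {f : ℕ → R} (h1 : f 1 = 1)
    (hmul : ∀ {a b : ℕ}, a ≠ 0 → b ≠ 0 → a.Coprime b → f (a * b) = f a * f b) :
    (ofFun f).IsMultiplicative :=
  IsMultiplicative.iff_ne_zero.2 ⟨by rw [ofFun_apply f one_ne_zero, h1], fun ha hb hab => by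
    rw [ofFun_apply f (mul_ne_zero ha hb), ofFun_apply f ha, ofFun_apply f hb, hmul ha hb hab]⟩

theorem mul_apply_prime_pow_succ [Semiring R] (f g : ArithmeticFunction R) {p : ℕ}
    (hp : p.Prime) (hg : ∀ j, 2 ≤ j → g (p ^ j) = 0) (k : ℕ) :
    (f * g) (p ^ (k + 1)) = f (p ^ (k + 1)) * g 1 + f (p ^ k) * g p := by
  rw [mul_apply, Nat.sum_divisorsAntidiagonal' (fun x y => f x * g y),
    Nat.divisors_prime_pow hp, Finset.sum_map, Finset.sum_range_succ', Finset.sum_range_succ',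
    Finset.sum_eq_zero fun j _ => by
      simp only [Function.Embedding.coeFn_mk, hg (j + 1 + 1) (by omega), mul_zero]]
  simp only [Function.Embedding.coeFn_mk, pow_zero, pow_one, Nat.div_one, zero_add]
  rw [add_comm, pow_succ p k, Nat.mul_div_cancel _ hp.pos]

theorem coe_moebius_apply_prime_pow_eq_zero [Ring R] {p j : ℕ} (hp : p.Prime) (hj : 2 ≤ j) :
    (μ : ArithmeticFunction R) (p ^ j) = 0 := by
  rw [intCoe_apply, moebius_apply_prime_pow hp (by omega), if_neg (by omega), Int.cast_zero]

theorem mul_coe_moebius_apply_prime_pow_succ [Ring R] (f : ArithmeticFunction R) {p : ℕ}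
    (hp : p.Prime) (k : ℕ) : (f * μ) (p ^ (k + 1)) = f (p ^ (k + 1)) - f (p ^ k) := by
  rw [mul_apply_prime_pow_succ f _ hp (fun _ => coe_moebius_apply_prime_pow_eq_zero hp) k]
  simp [moebius_apply_prime hp, sub_eq_add_neg]

theorem natCoe_pow_apply [Semiring R] {s x : ℕ} (hx : x ≠ 0) :
    (pow s : ArithmeticFunction R) x = (x : R) ^ s := by
  simp [pow_apply, hx]

theorem sum_divisors_mul_coe_moebius [Ring R] (f : ArithmeticFunction R) (n : ℕ) :
    ∑ d ∈ n.divisors, (f * μ) d = f n := by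
  rw [← coe_mul_zeta_apply, mul_assoc, coe_moebius_mul_coe_zeta, mul_one]

def IsStronglyMultiplicative [MonoidWithZero R] (f : ArithmeticFunction R) : Prop :=
  f.IsMultiplicative ∧ ∀ {p k : ℕ}, p.Prime → k ≠ 0 → f (p ^ k) = f p

namespace IsStronglyMultiplicative

section CommMonoidWithZero

variable [CommMonoidWithZero R] {f : ArithmeticFunction R}

theorem apply_eq_prod_primeFactors (hf : f.IsStronglyMultiplicative) {n : ℕ} (hn : n ≠ 0) :
    f n = ∏ p ∈ n.primeFactors, f p := by
  rw [hf.1.multiplicative_factorization f hn, Finsupp.prod, ← Nat.support_factorization]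
  exact Finset.prod_congr rfl fun p hp =>
    hf.2 (Nat.prime_of_mem_primeFactors (Nat.support_factorization n ▸ hp))
      (Finsupp.mem_support_iff.1 hp)

theorem apply_pow (hf : f.IsStronglyMultiplicative) (n : ℕ) {k : ℕ} (hk : k ≠ 0) :
    f (n ^ k) = f n := by
  rcases eq_or_ne n 0 with rfl | hn
  · rw [zero_pow hk]
  rw [hf.apply_eq_prod_primeFactors (pow_ne_zero k hn), Nat.primeFactors_pow n hk,
    hf.apply_eq_prod_primeFactors hn]

end CommMonoidWithZero

variable [CommRing R] {f : ArithmeticFunction R}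

theorem isMultiplicative_mul_moebius (hf : f.IsStronglyMultiplicative) :
    (f * μ).IsMultiplicative :=
  hf.1.mul isMultiplicative_moebius.intCast

theorem mul_moebius_apply_prime (hf : f.IsStronglyMultiplicative) {p : ℕ} (hp : p.Prime) :
    (f * μ) p = f p - 1 := by
  simpa [hf.1.map_one] using mul_coe_moebius_apply_prime_pow_succ f hp 0

theorem mul_moebius_apply_prime_pow (hf : f.IsStronglyMultiplicative) {p k : ℕ} (hp : p.Prime)
    (hk : 2 ≤ k) : (f * μ) (p ^ k) = 0 := by
  obtain ⟨j, rfl⟩ : ∃ j, k = j + 1 + 1 := ⟨k - 2, by omega⟩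
  rw [mul_coe_moebius_apply_prime_pow_succ f hp, hf.2 hp (by omega), hf.2 hp (by omega), sub_self]

end IsStronglyMultiplicative

end ArithmeticFunction

theorem isMultiplicative_ofFun_Js (s : ℕ) : (ofFun (Js s)).IsMultiplicative :=
  isMultiplicative_ofFun (by simp [Js]) fun _ _ hab => by
    rw [Js, Js, Js, hab.primeFactors_mul, Finset.prod_union hab.disjoint_primeFactors]
    push_cast
    ring

theorem Js_prime_pow_succ (s : ℕ) {p : ℕ} (hp : p.Prime) (k : ℕ) :
    Js s (p ^ (k + 1)) = (p : ℂ) ^ ((k + 1) * s) - (p : ℂ) ^ (k * s) := by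
  have hp0 : (p : ℂ) ≠ 0 := Nat.cast_ne_zero.2 hp.ne_zero
  rw [Js, Nat.primeFactors_prime_pow k.succ_ne_zero hp, Finset.prod_singleton, zpow_neg,
    zpow_natCast, Nat.cast_pow, ← pow_mul, add_mul, one_mul, pow_add]
  field_simp

theorem ofFun_Js_eq_pow_mul_moebius (s : ℕ) :
    ofFun (Js s) = (pow s : ArithmeticFunction ℂ) * μ := by
  refine (IsMultiplicative.eq_iff_eq_on_prime_powers _ (isMultiplicative_ofFun_Js s) _
    (isMultiplicative_pow.natCast.mul isMultiplicative_moebius.intCast)).2 fun p k hp => ?_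
  rcases k with _ | k
  · rw [pow_zero, (isMultiplicative_ofFun_Js s).map_one,
      (isMultiplicative_pow.natCast.mul isMultiplicative_moebius.intCast).map_one]
  rw [ofFun_apply _ (pow_ne_zero _ hp.ne_zero), Js_prime_pow_succ s hp,
    mul_apply_prime_pow_succ _ _ hp (fun _ => coe_moebius_apply_prime_pow_eq_zero hp),
    natCoe_pow_apply (pow_ne_zero _ hp.ne_zero), natCoe_pow_apply (pow_ne_zero _ hp.ne_zero)]
  simp [moebius_apply_prime hp, ← pow_mul, sub_eq_add_neg]

theorem ArithmeticFunction.IsStronglyMultiplicative.mul_ofFun_Js_apply_prime_pow_succ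
    {f : ArithmeticFunction ℂ} (hf : f.IsStronglyMultiplicative) (s : ℕ) {p : ℕ} (hp : p.Prime)
    (k : ℕ) :
    (f * ofFun (Js s)) (p ^ (k + 1)) = (p : ℂ) ^ (k * s) * ((p : ℂ) ^ s + f p - 1) := by
  rw [ofFun_Js_eq_pow_mul_moebius, mul_left_comm,
    mul_apply_prime_pow_succ _ _ hp (fun _ => hf.mul_moebius_apply_prime_pow hp),
    hf.mul_moebius_apply_prime hp, hf.isMultiplicative_mul_moebius.map_one,
    natCoe_pow_apply (pow_ne_zero _ hp.ne_zero), natCoe_pow_apply (pow_ne_zero _ hp.ne_zero),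
    Nat.cast_pow, Nat.cast_pow, ← pow_mul, ← pow_mul]
  ring

theorem sum_Icc_pow_pow_of_isPrimitiveRoot {K : Type*} [Field K] {ξ : K} {M : ℕ}
    (hξ : IsPrimitiveRoot ξ M) (n : ℕ) :
    ∑ j ∈ Finset.Icc 1 M, (ξ ^ n) ^ j = if M ∣ n then (M : K) else 0 := by
  rw [← Finset.Ico_add_one_right_eq_Icc]
  split_ifs with hdvd
  · simp [(hξ.pow_eq_one_iff_dvd n).2 hdvd]
  · rw [geom_sum_Ico (mt (hξ.pow_eq_one_iff_dvd n).1 hdvd) (by omega), pow_succ, ← pow_mul,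
      mul_comm n, pow_mul, hξ.pow_eq_one, one_pow, one_mul, pow_one, sub_self, zero_div]

theorem sum_exp_Icc {M : ℕ} (hM : M ≠ 0) (n : ℕ) :
    ∑ j ∈ Finset.Icc 1 M, Complex.exp (-(2 * Real.pi * Complex.I * j * n / M)) =
      if M ∣ n then (M : ℂ) else 0 := by
  rw [← sum_Icc_pow_pow_of_isPrimitiveRoot (Complex.isPrimitiveRoot_exp M hM).inv]
  refine Finset.sum_congr rfl fun j _ => ?_
  rw [← pow_mul, inv_pow, ← Complex.exp_nat_mul, ← Complex.exp_neg]
  congr 1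
  push_cast
  ring

theorem sum_Icc_filter_dvd {β : Type*} [AddCommMonoid β] (f : ℕ → β) {D : ℕ} (hD : D ≠ 0)
    (M : ℕ) :
    ∑ k ∈ (Finset.Icc 1 (D * M)).filter (D ∣ ·), f k = ∑ j ∈ Finset.Icc 1 M, f (D * j) := by
  refine (Finset.sum_nbij' (D * ·) (· / D) ?_ ?_ ?_ ?_ fun _ _ => rfl).symm
  · intro j hj
    simp only [Finset.mem_filter, Finset.mem_Icc] at hj ⊢
    exact ⟨⟨Nat.one_le_iff_ne_zero.2 (mul_ne_zero hD (by omega)), Nat.mul_le_mul_left D hj.2⟩,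
      dvd_mul_right D j⟩
  · rintro k hk
    simp only [Finset.mem_filter, Finset.mem_Icc] at hk ⊢
    obtain ⟨⟨hk1, hkM⟩, c, rfl⟩ := hk
    rw [Nat.mul_div_cancel_left c (Nat.pos_of_ne_zero hD)]
    exact ⟨Nat.pos_of_ne_zero (by rintro rfl; simp at hk1),
      Nat.le_of_mul_le_mul_left hkM (Nat.pos_of_ne_zero hD)⟩
  · intro j _
    exact Nat.mul_div_cancel_left j (Nat.pos_of_ne_zero hD)
  · intro k hk
    exact Nat.mul_div_cancel' (Finset.mem_filter.1 hk).2

theorem sum_exp_Icc_filter_dvd {D M : ℕ} (hD : D ≠ 0) (hM : M ≠ 0) (n : ℕ) :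
    ∑ k ∈ (Finset.Icc 1 (D * M)).filter (D ∣ ·),
      Complex.exp (-(2 * Real.pi * Complex.I * k * n / ((D * M : ℕ) : ℂ))) =
      if M ∣ n then (M : ℂ) else 0 := by
  rw [sum_Icc_filter_dvd _ hD, ← sum_exp_Icc hM]
  refine Finset.sum_congr rfl fun j _ => ?_
  have hD' : (D : ℂ) ≠ 0 := Nat.cast_ne_zero.2 hD
  congr 1
  push_cast
  field_simp

section GeneralizedGcd

variable {s n r e : ℕ}

-- `(n, r^s)_s = ggcdRoot s n r ^ s`, and the `m` of the theorem is `r / ggcdRoot s n r`.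
noncomputable def ggcdRoot (s n r : ℕ) : ℕ :=
  if h : r = 0 then 0 else
    (r.divisors.filter (· ^ s ∣ n)).max' ⟨1, by simp [h]⟩

theorem ggcdRoot_mem (hr : r ≠ 0) : ggcdRoot s n r ∈ r.divisors.filter (· ^ s ∣ n) := by
  rw [ggcdRoot, dif_neg hr]
  exact Finset.max'_mem _ _

theorem ggcdRoot_dvd (hr : r ≠ 0) : ggcdRoot s n r ∣ r :=
  (Nat.mem_divisors.1 (Finset.mem_filter.1 (ggcdRoot_mem hr)).1).1

theorem ggcdRoot_ne_zero (hr : r ≠ 0) : ggcdRoot s n r ≠ 0 :=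
  ne_zero_of_dvd_ne_zero hr (ggcdRoot_dvd hr)

theorem div_ggcdRoot_ne_zero (hr : r ≠ 0) : r / ggcdRoot s n r ≠ 0 :=
  (Nat.div_ne_zero_iff_of_dvd (ggcdRoot_dvd hr)).2 ⟨hr, ggcdRoot_ne_zero hr⟩

theorem pow_ggcdRoot_dvd (hr : r ≠ 0) : ggcdRoot s n r ^ s ∣ n :=
  (Finset.mem_filter.1 (ggcdRoot_mem hr)).2

theorem le_ggcdRoot (hr : r ≠ 0) (he : e ∣ r) (hen : e ^ s ∣ n) : e ≤ ggcdRoot s n r := by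
  rw [ggcdRoot, dif_neg hr]
  exact Finset.le_max' _ e (by simp [hr, he, hen])

theorem dvd_ggcdRoot_iff (hr : r ≠ 0) : e ∣ ggcdRoot s n r ↔ e ∣ r ∧ e ^ s ∣ n := by
  refine ⟨fun h => ⟨h.trans (ggcdRoot_dvd hr),
    (pow_dvd_pow_of_dvd h s).trans (pow_ggcdRoot_dvd hr)⟩, fun ⟨he, hen⟩ => ?_⟩
  -- `lcm e a` is again a candidate, so by maximality it is `a`.
  set a := ggcdRoot s n r
  have hL : e.lcm a ∣ r := Nat.lcm_dvd he (ggcdRoot_dvd hr)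
  have hLn : e.lcm a ^ s ∣ n := Nat.pow_lcm_pow ▸ Nat.lcm_dvd hen (pow_ggcdRoot_dvd hr)
  have hLa : e.lcm a = a := le_antisymm (le_ggcdRoot hr hL hLn)
    (Nat.le_of_dvd (Nat.pos_of_dvd_of_pos hL (Nat.pos_of_ne_zero hr)) (Nat.dvd_lcm_right e a))
  exact hLa ▸ Nat.dvd_lcm_left e a

theorem divisors_ggcdRoot (hr : r ≠ 0) :
    (ggcdRoot s n r).divisors = r.divisors.filter (· ^ s ∣ n) := by
  ext e
  simp [Nat.mem_divisors, dvd_ggcdRoot_iff hr, ggcdRoot_ne_zero hr, hr]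

theorem ggcd_eq_ggcdRoot_pow (hs : s ≠ 0) (hr : r ≠ 0) : ggcd s n (r ^ s) = ggcdRoot s n r ^ s :=
  IsGreatest.csSup_eq ⟨⟨⟨_, rfl⟩, pow_ggcdRoot_dvd hr, pow_dvd_pow_of_dvd (ggcdRoot_dvd hr) s⟩, by
    rintro _ ⟨⟨l, rfl⟩, hln, hlr⟩
    exact Nat.pow_le_pow_left (le_ggcdRoot hr ((Nat.pow_dvd_pow_iff hs).1 hlr) hln) s⟩

theorem ggcd_pow_ne_zero (hs : s ≠ 0) (hr : r ≠ 0) : ggcd s n (r ^ s) ≠ 0 :=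
  ggcd_eq_ggcdRoot_pow hs hr ▸ pow_ne_zero s (ggcdRoot_ne_zero hr)

theorem eq_div_ggcdRoot_of_pow_eq {m : ℕ} (hs : s ≠ 0) (hr : r ≠ 0)
    (hm : m ^ s = r ^ s / ggcd s n (r ^ s)) : m = r / ggcdRoot s n r := by
  refine Nat.pow_left_injective hs ?_
  show m ^ s = (r / ggcdRoot s n r) ^ s
  rw [hm, ggcd_eq_ggcdRoot_pow hs hr, Nat.div_pow (ggcdRoot_dvd hr)]

theorem ggcdRoot_one : ggcdRoot s n 1 = 1 :=
  Nat.dvd_one.1 (ggcdRoot_dvd one_ne_zero)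

theorem ggcdRoot_mul {r₁ r₂ : ℕ} (h₁ : r₁ ≠ 0) (h₂ : r₂ ≠ 0) (hco : r₁.Coprime r₂) :
    ggcdRoot s n (r₁ * r₂) = ggcdRoot s n r₁ * ggcdRoot s n r₂ := by
  have h₁₂ := mul_ne_zero h₁ h₂
  set a := ggcdRoot s n (r₁ * r₂)
  have hgcd : ∀ {r}, r ≠ 0 → a.gcd r ∣ ggcdRoot s n r := fun hr =>
    (dvd_ggcdRoot_iff hr).2 ⟨Nat.gcd_dvd_right _ _,
      (pow_dvd_pow_of_dvd (Nat.gcd_dvd_left _ _) s).trans (pow_ggcdRoot_dvd h₁₂)⟩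
  have hco' : (ggcdRoot s n r₁).Coprime (ggcdRoot s n r₂) :=
    (hco.coprime_dvd_left (ggcdRoot_dvd h₁)).coprime_dvd_right (ggcdRoot_dvd h₂)
  refine Nat.dvd_antisymm ?_ ((dvd_ggcdRoot_iff h₁₂).2 ⟨mul_dvd_mul (ggcdRoot_dvd h₁)
    (ggcdRoot_dvd h₂), ?_⟩)
  · calc a = a.gcd r₁ * a.gcd r₂ := by
          rw [← Nat.Coprime.gcd_mul _ hco, Nat.gcd_eq_left (ggcdRoot_dvd h₁₂)]
      _ ∣ ggcdRoot s n r₁ * ggcdRoot s n r₂ := mul_dvd_mul (hgcd h₁) (hgcd h₂)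
  · rw [mul_pow]
    exact (hco'.pow s s).mul_dvd_of_dvd_of_dvd (pow_ggcdRoot_dvd h₁) (pow_ggcdRoot_dvd h₂)

end GeneralizedGcd

section HolderIdentity

variable {s n : ℕ}

noncomputable def powDvdIndicator (s n : ℕ) : ArithmeticFunction ℂ :=
  ofFun fun e => if e ^ s ∣ n then (e : ℂ) ^ s else 0

theorem isMultiplicative_powDvdIndicator (s n : ℕ) : (powDvdIndicator s n).IsMultiplicative :=
  isMultiplicative_ofFun (by simp) fun {a b} _ _ hab => by
    have hdvd : (a * b) ^ s ∣ n ↔ a ^ s ∣ n ∧ b ^ s ∣ n := by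
      rw [mul_pow]
      exact ⟨fun h => ⟨dvd_of_mul_right_dvd h, dvd_of_mul_left_dvd h⟩,
        fun ⟨ha, hb⟩ => (hab.pow s s).mul_dvd_of_dvd_of_dvd ha hb⟩
    simp only [hdvd]
    split_ifs <;> simp_all [mul_pow]

theorem powDvdIndicator_apply_of_dvd {r e : ℕ} (hr : r ≠ 0) (he : e ∣ r) :
    powDvdIndicator s n e = if e ∣ ggcdRoot s n r then (e : ℂ) ^ s else 0 := by
  rw [powDvdIndicator, ofFun_apply _ (ne_zero_of_dvd_ne_zero hr he)]
  simp only [dvd_ggcdRoot_iff hr, he, true_and]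

noncomputable def holderRHS (s n : ℕ) (f : ArithmeticFunction ℂ) : ArithmeticFunction ℂ :=
  ofFun fun r => (f * μ) (r / ggcdRoot s n r) * (f * ofFun (Js s)) r /
    (f * ofFun (Js s)) (r / ggcdRoot s n r)

theorem isMultiplicative_holderRHS {f : ArithmeticFunction ℂ} (hf : f.IsMultiplicative) :
    (holderRHS s n f).IsMultiplicative := by
  have hg := hf.mul isMultiplicative_moebius.intCast
  have hH := hf.mul (isMultiplicative_ofFun_Js s)
  refine isMultiplicative_ofFun ?_ fun {a b} ha hb hab => ?_
  · rw [ggcdRoot_one, Nat.div_one, hg.map_one, hH.map_one, mul_one, div_one]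
  have hquot : (a / ggcdRoot s n a).Coprime (b / ggcdRoot s n b) :=
    (hab.coprime_dvd_left (Nat.div_dvd_of_dvd (ggcdRoot_dvd ha))).coprime_dvd_right
      (Nat.div_dvd_of_dvd (ggcdRoot_dvd hb))
  rw [ggcdRoot_mul ha hb hab, ← Nat.div_mul_div_comm (ggcdRoot_dvd ha) (ggcdRoot_dvd hb),
    hg.map_mul_of_coprime hquot, hH.map_mul_of_coprime hab, hH.map_mul_of_coprime hquot]
  ring

theorem powDvdIndicator_mul_apply_prime_pow_succ {f : ArithmeticFunction ℂ}
    (hf : f.IsStronglyMultiplicative) (hfp : ∀ p : ℕ, p.Prime → f p ≠ 1 - (p : ℂ) ^ s)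
    {p : ℕ} (hp : p.Prime) (k : ℕ) :
    (powDvdIndicator s n * (f * μ)) (p ^ (k + 1)) = holderRHS s n f (p ^ (k + 1)) := by
  have hpk : p ^ (k + 1) ≠ 0 := pow_ne_zero _ hp.ne_zero
  obtain ⟨α, hαk, hα⟩ := (Nat.dvd_prime_pow hp).1 (ggcdRoot_dvd (s := s) (n := n) hpk)
  have hind : ∀ i ≤ k + 1, powDvdIndicator s n (p ^ i) = if i ≤ α then (p : ℂ) ^ (i * s) else 0 :=
    fun i hi => by
      rw [powDvdIndicator_apply_of_dvd hpk (pow_dvd_pow p hi), hα]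
      simp only [Nat.pow_dvd_pow_iff_le_right hp.one_lt, Nat.cast_pow, ← pow_mul]
  have hX : (p : ℂ) ^ s + f p - 1 ≠ 0 := fun h => hfp p hp (by linear_combination h)
  have hH := hf.mul_ofFun_Js_apply_prime_pow_succ s hp
  rw [mul_apply_prime_pow_succ _ _ hp (fun _ => hf.mul_moebius_apply_prime_pow hp),
    hf.mul_moebius_apply_prime hp, hf.isMultiplicative_mul_moebius.map_one, hind _ le_rfl,
    hind k k.le_succ, holderRHS, ofFun_apply _ hpk, hα, Nat.pow_div hαk hp.pos]
  obtain rfl | rfl | hαk' : α = k + 1 ∨ α = k ∨ α < k := by omega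
  · rw [Nat.sub_self, pow_zero, hf.isMultiplicative_mul_moebius.map_one,
      (hf.1.mul (isMultiplicative_ofFun_Js s)).map_one, hH]
    simp only [le_refl, if_true, k.le_succ]
    ring
  · have hH₁ : (f * ofFun (Js s)) p = (p : ℂ) ^ s + f p - 1 := by simpa using hH 0
    rw [Nat.add_sub_cancel_left, pow_one, hH, hH₁, hf.mul_moebius_apply_prime hp]
    simp only [add_le_iff_nonpos_right, nonpos_iff_eq_zero, one_ne_zero, if_false, le_refl,
      if_true, mul_one, zero_add]
    field_simp
  · rw [hf.mul_moebius_apply_prime_pow hp (by omega)]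
    simp [show ¬ k + 1 ≤ α by omega, show ¬ k ≤ α by omega]

theorem powDvdIndicator_mul_eq_holderRHS {f : ArithmeticFunction ℂ}
    (hf : f.IsStronglyMultiplicative) (hfp : ∀ p : ℕ, p.Prime → f p ≠ 1 - (p : ℂ) ^ s) :
    powDvdIndicator s n * (f * μ) = holderRHS s n f := by
  have hmul := (isMultiplicative_powDvdIndicator s n).mul hf.isMultiplicative_mul_moebius
  refine (IsMultiplicative.eq_iff_eq_on_prime_powers _ hmul _
    (isMultiplicative_holderRHS hf.1)).2 fun p k hp => ?_
  rcases k with _ | k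
  · rw [pow_zero, hmul.map_one, (isMultiplicative_holderRHS hf.1).map_one]
  exact powDvdIndicator_mul_apply_prime_pow_succ hf hfp hp k

end HolderIdentity

theorem ArithmeticFunction.IsStronglyMultiplicative.apply_ggcd_pow {R : Type*} [CommRing R]
    {f : ArithmeticFunction R} (hf : f.IsStronglyMultiplicative) {s r : ℕ} (hs : s ≠ 0)
    (hr : r ≠ 0) (k : ℕ) :
    f (ggcd s k (r ^ s)) = ∑ d ∈ r.divisors, if d ^ s ∣ k then (f * μ) d else 0 := by
  rw [ggcd_eq_ggcdRoot_pow hs hr, hf.apply_pow _ hs, ← sum_divisors_mul_coe_moebius,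
    divisors_ggcdRoot hr, Finset.sum_filter]

theorem dft_sum_divisors_ite {s r : ℕ} (hr : r ≠ 0) (G : ℕ → ℂ) (n : ℕ) :
    dft s r (fun k => ∑ d ∈ r.divisors, if d ^ s ∣ k then G d else 0) n =
      ∑ d ∈ r.divisors, G d * powDvdIndicator s n (r / d) := by
  rw [dft]
  simp_rw [Finset.sum_mul, ite_mul, zero_mul]
  rw [Finset.sum_comm]
  refine Finset.sum_congr rfl fun d hd => ?_
  have hdr := Nat.dvd_of_mem_divisors hd
  have hd0 : d ^ s ≠ 0 := pow_ne_zero s (ne_zero_of_dvd_ne_zero hr hdr)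
  have hrd0 : r / d ≠ 0 := (Nat.div_ne_zero_iff_of_dvd hdr).2 ⟨hr, ne_zero_of_dvd_ne_zero hr hdr⟩
  have hrs : r ^ s = d ^ s * (r / d) ^ s := by rw [← mul_pow, Nat.mul_div_cancel' hdr]
  rw [← Finset.sum_filter, ← Finset.mul_sum, ← Nat.cast_pow, hrs,
    sum_exp_Icc_filter_dvd hd0 (pow_ne_zero s hrd0), powDvdIndicator, ofFun_apply _ hrd0]
  push_cast
  rfl

theorem ArithmeticFunction.IsStronglyMultiplicative.dft_comp_ggcd {f : ArithmeticFunction ℂ}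
    (hf : f.IsStronglyMultiplicative) {s r : ℕ} (hs : s ≠ 0) (hr : r ≠ 0) (n : ℕ) :
    dft s r (fun k => f (ggcd s k (r ^ s))) n = (powDvdIndicator s n * (f * μ)) r := by
  simp_rw [hf.apply_ggcd_pow hs hr]
  rw [dft_sum_divisors_ite hr, mul_comm (powDvdIndicator s n), mul_apply,
    Nat.sum_divisorsAntidiagonal (fun a b => (f * μ) a * powDvdIndicator s n b)]

theorem dirconv_eq_mul_apply (F G : ℕ → ℂ) {x : ℕ} (hx : x ≠ 0) :
    dirconv F G x = (ofFun F * ofFun G) x := by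
  rw [dirconv, mul_apply, Nat.sum_divisorsAntidiagonal (fun a b => ofFun F a * ofFun G b)]
  refine Finset.sum_congr rfl fun d hd => ?_
  have hdx := Nat.dvd_of_mem_divisors hd
  rw [ofFun_apply F (ne_zero_of_dvd_ne_zero hx hdx), ofFun_apply G
    (Nat.div_ne_zero_iff_of_dvd hdx |>.2 ⟨hx, ne_zero_of_dvd_ne_zero hx hdx⟩)]

theorem ofFun_moebius : ofFun (fun k => ((μ k : ℤ) : ℂ)) = μ := by
  ext k
  rcases eq_or_ne k 0 with rfl | hk
  · simp
  · rw [ofFun_apply _ hk, intCoe_apply]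

theorem holderRHS_ofFun_apply (F : ℕ → ℂ) {s n r : ℕ} (hr : r ≠ 0) :
    holderRHS s n (ofFun F) r =
      dirconv F (fun k => ((μ k : ℤ) : ℂ)) (r / ggcdRoot s n r) * dirconv F (Js s) r /
        dirconv F (Js s) (r / ggcdRoot s n r) := by
  rw [holderRHS, ofFun_apply _ hr, dirconv_eq_mul_apply _ _ (div_ggcdRoot_ne_zero hr),
    dirconv_eq_mul_apply _ _ hr, dirconv_eq_mul_apply _ _ (div_ggcdRoot_ne_zero hr), ofFun_moebius]

theorem isStronglyMultiplicative_ofFun {F : ℕ → ℂ} (hF1 : F 1 = 1)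
    (hFmult : ∀ a b : ℕ, Nat.Coprime a b → F (a * b) = F a * F b)
    (hFstrong : ∀ p a : ℕ, p.Prime → 1 ≤ a → F (p ^ a) = F p) :
    (ofFun F).IsStronglyMultiplicative :=
  ⟨isMultiplicative_ofFun hF1 fun _ _ hab => hFmult _ _ hab, fun hp hk => by
    rw [ofFun_apply _ (pow_ne_zero _ hp.ne_zero), ofFun_apply _ hp.ne_zero,
      hFstrong _ _ hp (Nat.one_le_iff_ne_zero.2 hk)]⟩

theorem stmt19_general (s : ℕ) (hs : 0 < s) (F : ℕ → ℂ)
    (hF1 : F 1 = 1)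
    (hFmult : ∀ a b : ℕ, Nat.Coprime a b → F (a * b) = F a * F b)
    (hFstrong : ∀ p a : ℕ, p.Prime → 1 ≤ a → F (p ^ a) = F p)
    (hFp : ∀ p : ℕ, p.Prime → F p ≠ 1 - (p : ℂ) ^ s)
    (r n m : ℕ) (hr : 0 < r)
    (hm : m ^ s = r ^ s / ggcd s n (r ^ s)) :
    dft s r (fun k => F (ggcd s k (r ^ s))) n =
      dirconv F (fun k => ((ArithmeticFunction.moebius k : ℤ) : ℂ)) m *
        dirconv F (Js s) r / dirconv F (Js s) m := by
  set f := ofFun F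
  have hf := isStronglyMultiplicative_ofFun hF1 hFmult hFstrong
  have hfp : ∀ p : ℕ, p.Prime → f p ≠ 1 - (p : ℂ) ^ s := fun p hp => by
    rw [ofFun_apply F hp.ne_zero]
    exact hFp p hp
  obtain rfl := eq_div_ggcdRoot_of_pow_eq hs.ne' hr.ne' hm
  calc dft s r (fun k => F (ggcd s k (r ^ s))) n
      = dft s r (fun k => f (ggcd s k (r ^ s))) n := by
        congr 1
        funext k
        exact (ofFun_apply F (ggcd_pow_ne_zero hs.ne' hr.ne')).symm
    _ = (powDvdIndicator s n * (f * μ)) r := hf.dft_comp_ggcd hs.ne' hr.ne' n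
    _ = holderRHS s n f r := by rw [powDvdIndicator_mul_eq_holderRHS hf hfp]
    _ = _ := holderRHS_ofFun_apply F hr.ne'

theorem stmt19 (s : ℕ) (hs : 0 < s) (F : ℕ → ℂ)
    (hF1 : F 1 = 1)
    (hFmult : ∀ a b : ℕ, Nat.Coprime a b → F (a * b) = F a * F b)
    (hFstrong : ∀ p a : ℕ, p.Prime → 1 ≤ a → F (p ^ a) = F p)
    (hFp : ∀ p : ℕ, p.Prime → F p ≠ 1 - (p : ℂ) ^ s)
    (r n m : ℕ) (hr : 0 < r) (hn : 0 < n)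
    (hm : m ^ s = r ^ s / ggcd s n (r ^ s)) :
    dft s r (fun k => F (ggcd s k (r ^ s))) n =
      dirconv F (fun k => ((ArithmeticFunction.moebius k : ℤ) : ℂ)) m *
        dirconv F (Js s) r / dirconv F (Js s) m :=
  stmt19_general s hs F hF1 hFmult hFstrong hFp r n m hr hm
end
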